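/- With the data below, define w(t, i) := (exp((T − t)·A)·𝟏)_i and v(t, i, c) := c + (1/k)·log w(t, i). Then: (a) w(t, i) > 0 for all t ∈ [0, T] and all i, so v is well defined; (b) v(T, i, c) = c for all i and all c ∈ ℝ; and (c) for all t ∈ [0, T], all i ∈ {0, …, 2N} and all c ∈ ℝ, ∂ₜ v(t, i, c) − P_i + λ⁺·exp(k·(Z⁺_i − s)·Δ⁺_i) · sSup{ exp(−k·p·Z⁺_i·Δ⁺_i)·( v(t, i+1, c + p·Z⁺_i·Δ⁺_i) − v(t, i, c) ) : p ∈ ℝ } · [i < 2N] + λ⁻·exp(−k·(Z⁻_i − s)·Δ⁻_i) · sSup{ exp(−k·m·Z⁻_i·Δ⁻_i)·( v(t, i−1, c + m·Z⁻_i·Δ⁻_i) − v(t, i, c) ) : m ∈ ℝ } · [i > 0] = 0, where each sSup is the supremum over the indicated set of real numbers (each of these sets is nonempty and bounded above, so the suprema are finite). -/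

import Mathlib

/-!
With `w = exp ((T - t) • A) 𝟏` we have `∂ₜ w = -A w`, so
`∂ₜ v(t, i, c) = -(A w)_i / (k w_i)`.
Each fee supremum is explicit: `sup_x e^{-kx} (x + b) = e^{kb - 1} / k`, attained at the
first-order condition `x = 1/k - b`; for `b = (log w_j - log w_i) / k` this is
`w_j / w_i · e^{-1} / k`. The off-diagonal entries of `A` are exactly
`λ^± e^{±k (Z^± - s) Δ^±} e^{-1}`, so the two supremum terms cancel the off-diagonal part of
`(A w)_i / (k w_i)`, and the diagonal entry `-k P_i` cancels the penalty.

Positivity of `w`: `A` has nonnegative off-diagonal entries, so `M + μ I` is entrywise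
nonnegative for `M = (T - t) A` and `μ` large, and `exp M = e^{-μ} exp (M + μ I)` has row sums
at least `e^{-μ}`.
-/

open Matrix

theorem Fin.sum_ite_val_eq {M : Type*} [AddCommMonoid M] {n : ℕ} (k : ℕ) (g : Fin n → M) :
    ∑ j : Fin n, (if (j : ℕ) = k then g j else 0) = if h : k < n then g ⟨k, h⟩ else 0 := by
  split_ifs with h
  · rw [Finset.sum_eq_single ⟨k, h⟩ (fun j _ hj => if_neg fun hjk => hj (Fin.ext hjk))
      (by simp)]
    simp
  · exact Finset.sum_eq_zero fun j _ => if_neg fun hjk : (j : ℕ) = k => h (hjk ▸ j.isLt)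

namespace Matrix

open NormedSpace

theorem mulVec_apply_of_tridiagonal {R : Type*} [NonUnitalNonAssocSemiring R] {n : ℕ}
    {A : Matrix (Fin (n + 1)) (Fin (n + 1)) R}
    (hA : ∀ i j : Fin (n + 1),
      (j : ℕ) ≠ i → (j : ℕ) ≠ i + 1 → (j : ℕ) + 1 ≠ i → A i j = 0)
    (x : Fin (n + 1) → R) (i : Fin (n + 1)) :
    (A *ᵥ x) i = A i i * x i
      + (if h : (i : ℕ) < n then A i ⟨i + 1, by omega⟩ * x ⟨i + 1, by omega⟩ else 0)
      + (if h : 0 < (i : ℕ) then A i ⟨i - 1, by omega⟩ * x ⟨i - 1, by omega⟩ else 0) := by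
  have hterm : ∀ j : Fin (n + 1), A i j * x j = (if (j : ℕ) = i then A i j * x j else 0)
      + (if (j : ℕ) = i + 1 then A i j * x j else 0)
      + (if 0 < (i : ℕ) then (if (j : ℕ) = i - 1 then A i j * x j else 0) else 0) := by
    intro j
    split_ifs <;> first
      | omega
      | (simp; done)
      | simp [hA i j (by omega) (by omega) (by omega)]
  simp only [mulVec, dotProduct]
  rw [Finset.sum_congr rfl fun j _ => hterm j]
  simp only [Finset.sum_add_distrib, Finset.sum_ite_irrel, Finset.sum_const_zero,
    Fin.sum_ite_val_eq]
  split_ifs <;> first | omega | simp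

variable {m : Type*} [Fintype m] [DecidableEq m]

theorem one_apply_le_exp_apply {B : Matrix m m ℝ} (hB : ∀ a b, 0 ≤ B a b) (a b : m) :
    (1 : Matrix m m ℝ) a b ≤ exp B a b := by
  -- `exp` only sees the topology, so any norm inducing it may be chosen for the series estimates.
  let _ : NormedRing (Matrix m m ℝ) := Matrix.linftyOpNormedRing
  let _ : NormedAlgebra ℝ (Matrix m m ℝ) := Matrix.linftyOpNormedAlgebra
  have hs : HasSum (fun n : ℕ => ((n.factorial : ℝ)⁻¹ • B ^ n) a b) (exp B a b) := by
    rw [exp_eq_tsum ℝ]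
    exact Pi.hasSum.1 (Pi.hasSum.1 (expSeries_summable' B).hasSum a) b
  simpa using le_hasSum hs 0 fun n _ => mul_nonneg (by positivity) (pow_apply_nonneg hB n a b)

theorem exp_add_smul_one (B : Matrix m m ℝ) (c : ℝ) :
    exp (B + c • 1) = Real.exp c • exp B := by
  rw [exp_add_of_commute _ _ ((Commute.one_right B).smul_right c), smul_one_eq_diagonal,
    exp_diagonal, Pi.exp_def, ← Real.exp_eq_exp_ℝ, ← smul_one_eq_diagonal, mul_smul_one]

theorem exp_mulVec_one_pos {M : Matrix m m ℝ} (hM : ∀ a b, a ≠ b → 0 ≤ M a b) (i : m) :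
    0 < (exp M *ᵥ 1) i := by
  set μ := ∑ j, |M j j|
  have hB : ∀ a b, 0 ≤ (M + μ • 1) a b := by
    intro a b
    rcases eq_or_ne a b with rfl | hab
    · have : |M a a| ≤ μ := Finset.single_le_sum (f := fun j => |M j j|)
        (fun j _ => abs_nonneg _) (Finset.mem_univ a)
      simp only [add_apply, smul_apply, one_apply_eq, smul_eq_mul, mul_one]
      linarith [neg_abs_le (M a a)]
    · simpa [one_apply_ne hab] using hM a b hab
  have hsplit : M = (M + μ • 1) + (-μ) • 1 := by rw [neg_smul]; abel
  have hrow : 1 ≤ (exp (M + μ • 1) *ᵥ 1) i := by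
    calc (1 : ℝ) = ((1 : Matrix m m ℝ) *ᵥ 1) i := by simp
      _ ≤ _ := Finset.sum_le_sum fun j _ => by simpa using one_apply_le_exp_apply hB i j
  rw [hsplit, exp_add_smul_one, smul_mulVec, Pi.smul_apply, smul_eq_mul]
  exact mul_pos (Real.exp_pos _) (by linarith)

theorem hasDerivAt_exp_sub_smul_mulVec (A : Matrix m m ℝ) (x : m → ℝ) (T t : ℝ) :
    HasDerivAt (fun u => exp ((T - u) • A) *ᵥ x)
      (-(A *ᵥ (exp ((T - t) • A) *ᵥ x))) t := by
  let _ : NormedRing (Matrix m m ℝ) := Matrix.linftyOpNormedRing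
  let _ : NormedAlgebra ℝ (Matrix m m ℝ) := Matrix.linftyOpNormedAlgebra
  let L : Matrix m m ℝ →L[ℝ] m → ℝ := LinearMap.toContinuousLinearMap
    { toFun := (· *ᵥ x)
      map_add' := fun _ _ => add_mulVec _ _ _
      map_smul' := fun _ _ => smul_mulVec _ _ _ }
  have hexp := (hasDerivAt_exp_smul_const' A (T - t)).scomp t ((hasDerivAt_id t).const_sub T)
  refine (L.hasFDerivAt.comp_hasDerivAt t hexp).congr_deriv ?_
  change ((-1 : ℝ) • (A * exp ((T - t) • A))) *ᵥ x = _
  rw [smul_mulVec, ← mulVec_mulVec, neg_one_smul]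

end Matrix

section FeeOptimization

open Real

theorem isGreatest_range_exp_neg_mul_mul_add {k : ℝ} (hk : 0 < k) (b : ℝ) :
    IsGreatest (Set.range fun x => exp (-(k * x)) * (x + b)) (exp (k * b - 1) / k) := by
  refine ⟨⟨1 / k - b, ?_⟩, ?_⟩
  · field_simp
    ring_nf
  · rintro _ ⟨x, rfl⟩
    dsimp only
    set y := k * (x + b) with hy_def
    have hy : y * exp (-(y - 1)) ≤ 1 := by
      calc y * exp (-(y - 1)) ≤ exp (y - 1) * exp (-(y - 1)) := by
            gcongr; linarith [add_one_le_exp (y - 1)]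
        _ = 1 := by rw [← exp_add, add_neg_cancel, exp_zero]
    have hsplit : exp (-(k * x)) * (x + b) = exp (k * b - 1) / k * (y * exp (-(y - 1))) := by
      rw [show -(k * x) = (k * b - 1) + -(y - 1) by ring, exp_add]
      field_simp
      rw [hy_def]
    rw [hsplit]
    exact mul_le_of_le_one_right (by positivity) hy

theorem isGreatest_range_fee_objective {k Z Δ y y' : ℝ} (hk : 0 < k) (hZΔ : Z * Δ ≠ 0)
    (hy : 0 < y) (hy' : 0 < y') (c : ℝ) :
    IsGreatest (Set.range fun p => exp (-(k * p * Z * Δ)) *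
        (c + p * Z * Δ + 1 / k * log y' - (c + 1 / k * log y)))
      (y' / y * exp (-1) / k) := by
  have h := isGreatest_range_exp_neg_mul_mul_add hk ((log y' - log y) / k)
  have hval : exp (k * ((log y' - log y) / k) - 1) = y' / y * exp (-1) := by
    rw [mul_div_cancel₀ _ hk.ne', sub_eq_add_neg, exp_add, exp_sub, exp_log hy, exp_log hy']
  rw [← (mul_right_surjective₀ hZΔ).range_comp, hval] at h
  convert h using 3 with p
  simp only [Function.comp_apply]
  ring_nf

end FeeOptimization

noncomputable def feeGenerator {n : ℕ} (k lp lm s : ℝ) (P Δp Δm Zp Zm : Fin (n + 1) → ℝ) :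
    Matrix (Fin (n + 1)) (Fin (n + 1)) ℝ :=
  Matrix.of fun i j =>
    if (j : ℕ) = (i : ℕ) then -(k * P i)
    else if (j : ℕ) = (i : ℕ) + 1 then
      lp * Real.exp (-(k * s * Δp i) - 1) * Real.exp (k * Zp i * Δp i)
    else if (j : ℕ) + 1 = (i : ℕ) then
      lm * Real.exp (k * s * Δm i - 1) * Real.exp (-(k * Zm i * Δm i))
    else 0

section FeeGenerator

variable {n : ℕ} {k lp lm s : ℝ} {P Δp Δm Zp Zm : Fin (n + 1) → ℝ}

theorem feeGenerator_apply_self (i : Fin (n + 1)) :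
    feeGenerator k lp lm s P Δp Δm Zp Zm i i = -(k * P i) := by
  simp [feeGenerator]

theorem feeGenerator_apply_of_not_adj {i j : Fin (n + 1)}
    (h₀ : (j : ℕ) ≠ i) (h₁ : (j : ℕ) ≠ i + 1) (h₂ : (j : ℕ) + 1 ≠ i) :
    feeGenerator k lp lm s P Δp Δm Zp Zm i j = 0 := by
  simp [feeGenerator, h₀, h₁, h₂]

theorem feeGenerator_apply_nonneg (hlp : 0 < lp) (hlm : 0 < lm) {i j : Fin (n + 1)}
    (hij : i ≠ j) :
    0 ≤ feeGenerator k lp lm s P Δp Δm Zp Zm i j := by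
  simp only [feeGenerator, of_apply, if_neg fun h => hij (Fin.ext h).symm]
  split_ifs <;> positivity

theorem feeGenerator_apply_succ {i : Fin (n + 1)} (h : (i : ℕ) < n) :
    feeGenerator k lp lm s P Δp Δm Zp Zm i ⟨i + 1, by omega⟩
      = lp * Real.exp (k * (Zp i - s) * Δp i) * Real.exp (-1) := by
  simp only [feeGenerator, of_apply, if_neg (show (i : ℕ) + 1 ≠ i by omega), if_true, mul_assoc,
    ← Real.exp_add]
  ring_nf

theorem feeGenerator_apply_pred {i : Fin (n + 1)} (h : 0 < (i : ℕ)) :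
    feeGenerator k lp lm s P Δp Δm Zp Zm i ⟨i - 1, by omega⟩
      = lm * Real.exp (-(k * (Zm i - s) * Δm i)) * Real.exp (-1) := by
  simp only [feeGenerator, of_apply, if_neg (show (i : ℕ) - 1 ≠ i by omega),
    if_neg (show (i : ℕ) - 1 ≠ i + 1 by omega), if_pos (show (i : ℕ) - 1 + 1 = i by omega),
    mul_assoc, ← Real.exp_add]
  ring_nf

end FeeGenerator

/-- The function `v(t, i, c) = c + (1/k) log ((exp ((T - t) • A) ⬝ 𝟏)_i)` is well
defined, has terminal value `c`, and solves the Hamilton–Jacobi–Bellman equation of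
the AMM fee-setting problem with constant oracle price, where the suprema over the
fee choices are finite. -/
theorem stmt6 (N : ℕ)
    (Δp Δm Zp Zm P : Fin (2 * N + 1) → ℝ)
    (hΔp : ∀ i : Fin (2 * N + 1), (i : ℕ) < 2 * N → 0 < Δp i)
    (hΔm : ∀ i : Fin (2 * N + 1), 0 < (i : ℕ) → 0 < Δm i)
    (hZp : ∀ i : Fin (2 * N + 1), (i : ℕ) < 2 * N → 0 < Zp i)
    (hZm : ∀ i : Fin (2 * N + 1), 0 < (i : ℕ) → 0 < Zm i)
    (lp lm k s T : ℝ) (hlp : 0 < lp) (hlm : 0 < lm) (hk : 0 < k)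
    (A : Matrix (Fin (2 * N + 1)) (Fin (2 * N + 1)) ℝ)
    (hA : ∀ i j : Fin (2 * N + 1), A i j =
      if (j : ℕ) = (i : ℕ) then -(k * P i)
      else if (j : ℕ) = (i : ℕ) + 1 then
        lp * Real.exp (-(k * s * Δp i) - 1) * Real.exp (k * Zp i * Δp i)
      else if (j : ℕ) + 1 = (i : ℕ) then
        lm * Real.exp (k * s * Δm i - 1) * Real.exp (-(k * Zm i * Δm i))
      else 0)
    (w : ℝ → Fin (2 * N + 1) → ℝ)
    (hw : ∀ t : ℝ, w t = (NormedSpace.exp ((T - t) • A)).mulVec 1)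
    (v : ℝ → Fin (2 * N + 1) → ℝ → ℝ)
    (hv : ∀ t : ℝ, ∀ i : Fin (2 * N + 1), ∀ c : ℝ,
      v t i c = c + (1 / k) * Real.log (w t i)) :
    -- (a) positivity, so `v` is well defined
    (∀ t ∈ Set.Icc (0 : ℝ) T, ∀ i : Fin (2 * N + 1), 0 < w t i) ∧
    -- (b) terminal condition
    (∀ i : Fin (2 * N + 1), ∀ c : ℝ, v T i c = c) ∧
    -- (c) HJB equation, with the suprema being over nonempty bounded-above sets
    (∀ t ∈ Set.Icc (0 : ℝ) T, ∀ i : Fin (2 * N + 1), ∀ c : ℝ,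
      (∀ h : (i : ℕ) < 2 * N,
        BddAbove (Set.range fun p : ℝ =>
          Real.exp (-(k * p * Zp i * Δp i)) *
            (v t ⟨(i : ℕ) + 1, by omega⟩ (c + p * Zp i * Δp i) - v t i c))) ∧
      (∀ h : 0 < (i : ℕ),
        BddAbove (Set.range fun m : ℝ =>
          Real.exp (-(k * m * Zm i * Δm i)) *
            (v t ⟨(i : ℕ) - 1, by omega⟩ (c + m * Zm i * Δm i) - v t i c))) ∧
      deriv (fun τ : ℝ => v τ i c) t - P i
        + (if h : (i : ℕ) < 2 * N then
            lp * Real.exp (k * (Zp i - s) * Δp i) *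
              sSup (Set.range fun p : ℝ =>
                Real.exp (-(k * p * Zp i * Δp i)) *
                  (v t ⟨(i : ℕ) + 1, by omega⟩ (c + p * Zp i * Δp i) - v t i c))
          else 0)
        + (if h : 0 < (i : ℕ) then
            lm * Real.exp (-(k * (Zm i - s) * Δm i)) *
              sSup (Set.range fun m : ℝ =>
                Real.exp (-(k * m * Zm i * Δm i)) *
                  (v t ⟨(i : ℕ) - 1, by omega⟩ (c + m * Zm i * Δm i) - v t i c))
          else 0) = 0) := by
  obtain rfl : A = feeGenerator k lp lm s P Δp Δm Zp Zm := Matrix.ext hA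
  have hpos : ∀ t ∈ Set.Icc (0 : ℝ) T, ∀ i, 0 < w t i := fun t ht i => by
    rw [hw]
    exact exp_mulVec_one_pos
      (fun a b hab => mul_nonneg (sub_nonneg.2 ht.2) (feeGenerator_apply_nonneg hlp hlm hab)) i
  refine ⟨hpos, fun i c => by simp [hv, hw], fun t ht i c => ?_⟩
  have hwi := hpos t ht i
  have hderiv : deriv (fun τ => v τ i c) t
      = -((feeGenerator k lp lm s P Δp Δm Zp Zm) *ᵥ w t) i / (k * w t i) := by
    have hw' := hasDerivAt_pi.1 (hasDerivAt_exp_sub_smul_mulVec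
      (feeGenerator k lp lm s P Δp Δm Zp Zm) 1 T t) i
    simp only [← hw, Pi.neg_apply] at hw'
    simp only [hv]
    rw [(((hw'.log hwi.ne').const_mul (1 / k)).const_add c).deriv]
    field_simp
  have hfee : ∀ (j : Fin (2 * N + 1)) (Z Δ : ℝ), 0 < Z → 0 < Δ →
      IsGreatest
        (Set.range fun p : ℝ => Real.exp (-(k * p * Z * Δ)) * (v t j (c + p * Z * Δ) - v t i c))
        (w t j / w t i * Real.exp (-1) / k) := fun j Z Δ hZ hΔ => by
    simp only [hv]
    exact isGreatest_range_fee_objective hk (mul_pos hZ hΔ).ne' hwi (hpos t ht j) c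
  have hup := fun h : (i : ℕ) < 2 * N => hfee ⟨i + 1, by omega⟩ _ _ (hZp i h) (hΔp i h)
  have hdown := fun h : 0 < (i : ℕ) => hfee ⟨i - 1, by omega⟩ _ _ (hZm i h) (hΔm i h)
  refine ⟨fun h => (hup h).bddAbove, fun h => (hdown h).bddAbove, ?_⟩
  rw [hderiv, mulVec_apply_of_tridiagonal fun _ _ => feeGenerator_apply_of_not_adj,
    feeGenerator_apply_self]
  split_ifs with hu hd hd <;>
    simp only [fun h => (hup h).csSup_eq, fun h => (hdown h).csSup_eq, feeGenerator_apply_succ,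
      feeGenerator_apply_pred, hu, hd, add_zero] <;>
    field_simp <;> ring
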